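/- arXiv:1206.5561 — 3 statements merged into one kernel-verified Lean document; each statement's English description precedes it below -/
import Mathlib

section
/- If λ > 4, then for every E ∈ ℝ and every k ≥ -1, at least one of |x_k(E,λ)|, |x_{k+1}(E,λ)|, |x_{k+2}(E,λ)| is strictly greater than 1. More precisely: if three real numbers a, b, c satisfy a² + b² + c² - 2abc = 1 + λ²/4 with λ > 4, then max{|a|,|b|,|c|} > 1. -/
theorem sq_add_sq_add_sq_sub_two_mul_mul_le_five {a b c : ℝ}
    (ha : |a| ≤ 1) (hb : |b| ≤ 1) (hc : |c| ≤ 1) :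
    a ^ 2 + b ^ 2 + c ^ 2 - 2 * a * b * c ≤ 5 := by
  have hab : |a * b| ≤ 1 := by
    rw [abs_mul]
    exact mul_le_one₀ ha (abs_nonneg b) hb
  have hsub : (c - a * b) ^ 2 ≤ 2 ^ 2 := by
    rw [← sq_abs]
    exact pow_le_pow_left₀ (abs_nonneg _) ((abs_sub c (a * b)).trans (by linarith)) 2
  have hprod : 0 ≤ (1 - a ^ 2) * (1 - b ^ 2) :=
    mul_nonneg (sub_nonneg.2 (sq_le_one_iff_abs_le_one a |>.2 ha))
      (sub_nonneg.2 (sq_le_one_iff_abs_le_one b |>.2 hb))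
  calc a ^ 2 + b ^ 2 + c ^ 2 - 2 * a * b * c
      = 1 + (c - a * b) ^ 2 - (1 - a ^ 2) * (1 - b ^ 2) := by ring
    _ ≤ 5 := by linarith

/-- If `a² + b² + c² - 2abc = 1 + λ²/4` with `λ > 4`, then `max{|a|,|b|,|c|} > 1`. -/
theorem fricke_vogt_escape (lam a b c : ℝ) (hlam : lam > 4)
    (h : a ^ 2 + b ^ 2 + c ^ 2 - 2 * a * b * c = 1 + lam ^ 2 / 4) :
    1 < max |a| (max |b| |c|) := by
  by_contra! hmax
  obtain ⟨ha, hb, hc⟩ : |a| ≤ 1 ∧ |b| ≤ 1 ∧ |c| ≤ 1 := by simpa only [max_le_iff] using hmax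
  have hfive := sq_add_sq_add_sq_sub_two_mul_mul_le_five ha hb hc
  nlinarith
end

section
/- For each x ∈ ℝ with x ≠ 1/2, the point (x, x/(2x-1), x) is fixed by T², where T(x,y,z) = (2xy-z, x, y); i.e., T²(x, x/(2x-1), x) = (x, x/(2x-1), x). -/
/-- `T` sends `(x, y, x)` to `(y, x, y)`, and since the relation is equivalent to `2xy - y = x`,
the second step comes back. -/
theorem fixed_apply_apply_of_two_mul_mul_sub_eq
    (T : ℝ × ℝ × ℝ → ℝ × ℝ × ℝ)
    (hT : ∀ x y z : ℝ, T (x, y, z) = (2 * x * y - z, x, y)) {x y : ℝ}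
    (h : 2 * x * y - x = y) : T (T (x, y, x)) = (x, y, x) := by
  rw [hT x y x, h, hT]
  congr 1
  linarith

/-- For `x ≠ 1/2`, the point `(x, x/(2x-1), x)` is fixed by `T²`,
where `T(x,y,z) = (2xy - z, x, y)`. -/
theorem period_two_curve_fixed
    (T : ℝ × ℝ × ℝ → ℝ × ℝ × ℝ)
    (hT : ∀ x y z : ℝ, T (x, y, z) = (2 * x * y - z, x, y)) :
    ∀ x : ℝ, x ≠ 1 / 2 →
      T (T (x, x / (2 * x - 1), x)) = (x, x / (2 * x - 1), x) := by
  intro x hx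
  have hden : 2 * x - 1 ≠ 0 := fun h => hx (by linarith)
  apply fixed_apply_apply_of_two_mul_mul_sub_eq T hT
  field_simp
  ring
end

section
/- For x near 1 (with x > 1/2), the function λ^u(x) = (1 - 2x + 8x² + √(-3 + 12x + 4x² - 32x³ + 64x⁴)) / (2(2x-1)) satisfies λ^u(1) = (7+3√5)/2, (λ^u)'(1) = 0, and (λ^u)''(1) > 0; in particular, λ^u has a strict local minimum at x = 1. -/
/-!
The radicand is `(8x² - 2x + 1)² - (2(2x - 1))²`, so for `x > 1/2` we have
`λᵘ(x) = τ + √(τ² - 1)` with `τ(x) = (8x² - 2x + 1) / (2(2x - 1))`. The outer function is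
increasing on `[1, ∞)` and `τ(x) - 7/2 = 4(x - 1)² / (2x - 1)`, which gives the strict minimum
and the value at `1`. The derivative of `λᵘ` factors as `(x - 1) k(x)` with `k` continuous and
`k(1) = 8 (1 + 7 / (3√5)) > 0`, which gives `(λᵘ)'(1) = 0` and `(λᵘ)''(1) = k(1) > 0`.
-/

open Real Filter Topology Set

theorem hasDerivAt_sub_smul_of_continuousAt {𝕜 F : Type*} [NontriviallyNormedField 𝕜]
    [NormedAddCommGroup F] [NormedSpace 𝕜 F] {k : 𝕜 → F} {a : 𝕜} (hk : ContinuousAt k a) :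
    HasDerivAt (fun y => (y - a) • k y) (k a) a := by
  rw [hasDerivAt_iff_tendsto_slope]
  refine (hk.tendsto.mono_left nhdsWithin_le_nhds).congr' ?_
  filter_upwards [self_mem_nhdsWithin] with y (hy : y ≠ a)
  rw [slope_def_module, sub_self, zero_smul, sub_zero, smul_smul,
    inv_mul_cancel₀ (sub_ne_zero.mpr hy), one_smul]

/-- The larger root of `λ² - 2τλ + 1`. -/
noncomputable def largerRoot (τ : ℝ) : ℝ := τ + √(τ ^ 2 - 1)

noncomputable def largerRootDeriv (τ : ℝ) : ℝ := 1 + τ / √(τ ^ 2 - 1)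

lemma largerRoot_strictMonoOn : StrictMonoOn largerRoot (Ici 1) := by
  intro a ha b hb hab
  have : √(a ^ 2 - 1) ≤ √(b ^ 2 - 1) := Real.sqrt_le_sqrt (by nlinarith [mem_Ici.mp ha])
  unfold largerRoot
  linarith

lemma hasDerivAt_largerRoot {τ : ℝ} (hτ : 1 < τ) :
    HasDerivAt largerRoot (largerRootDeriv τ) τ := by
  have hsq : HasDerivAt (fun t : ℝ => t ^ 2 - 1) (2 * τ) τ := by
    simpa using (hasDerivAt_pow 2 τ).sub_const 1
  refine ((hasDerivAt_id τ).add (hsq.sqrt (by nlinarith))).congr_deriv ?_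
  have : √(τ ^ 2 - 1) ≠ 0 := (Real.sqrt_pos.mpr (by nlinarith)).ne'
  unfold largerRootDeriv
  field_simp

lemma continuousAt_largerRootDeriv {τ : ℝ} (hτ : 1 < τ) : ContinuousAt largerRootDeriv τ := by
  have : √(τ ^ 2 - 1) ≠ 0 := (Real.sqrt_pos.mpr (by nlinarith)).ne'
  unfold largerRootDeriv
  fun_prop (disch := assumption)

lemma largerRootDeriv_pos {τ : ℝ} (hτ : 0 ≤ τ) : 0 < largerRootDeriv τ := by
  unfold largerRootDeriv
  positivity

lemma largerRoot_seven_halves : largerRoot (7 / 2) = (7 + 3 * √5) / 2 := by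
  have : √(45 / 4 : ℝ) = 3 * √5 / 2 := by
    rw [show (45 / 4 : ℝ) = (3 / 2) ^ 2 * 5 by norm_num, Real.sqrt_mul (by positivity),
      Real.sqrt_sq (by norm_num)]
    ring
  rw [largerRoot, show (7 / 2 : ℝ) ^ 2 - 1 = 45 / 4 by norm_num, this]
  ring

noncomputable def tau (x : ℝ) : ℝ := (8 * x ^ 2 - 2 * x + 1) / (2 * (2 * x - 1))

lemma tau_one : tau 1 = 7 / 2 := by norm_num [tau]

lemma tau_sub_seven_halves {x : ℝ} (hx : 2 * x - 1 ≠ 0) :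
    tau x - 7 / 2 = 4 * (x - 1) ^ 2 / (2 * x - 1) := by
  rw [tau, div_sub' (by positivity), div_eq_div_iff (by simpa using hx) hx]
  ring

lemma seven_halves_le_tau {x : ℝ} (hx : 1 / 2 < x) : 7 / 2 ≤ tau x := by
  have := tau_sub_seven_halves (x := x) (by linarith)
  have : 0 ≤ 4 * (x - 1) ^ 2 / (2 * x - 1) := div_nonneg (by positivity) (by linarith)
  linarith

lemma seven_halves_lt_tau {x : ℝ} (hx : 1 / 2 < x) (hx₁ : x ≠ 1) : 7 / 2 < tau x := by
  have := tau_sub_seven_halves (x := x) (by linarith)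
  have : 0 < 4 * (x - 1) ^ 2 / (2 * x - 1) :=
    div_pos (by have := sub_ne_zero.mpr hx₁; positivity) (by linarith)
  linarith

lemma hasDerivAt_tau {x : ℝ} (hx : 2 * x - 1 ≠ 0) :
    HasDerivAt tau ((x - 1) * (8 * x / (2 * x - 1) ^ 2)) x := by
  have hnum : HasDerivAt (fun y : ℝ => 8 * y ^ 2 - 2 * y + 1) (16 * x - 2) x := by
    refine (((hasDerivAt_pow 2 x).const_mul 8).sub
      ((hasDerivAt_id x).const_mul 2)).add_const 1 |>.congr_deriv ?_
    norm_num
    ring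
  have hden : HasDerivAt (fun y : ℝ => 2 * (2 * y - 1)) 4 x := by
    refine ((((hasDerivAt_id x).const_mul 2).sub_const 1).const_mul 2).congr_deriv ?_
    norm_num
  refine (hnum.div hden (by simpa using hx)).congr_deriv ?_
  field_simp
  ring

lemma largerRoot_tau {x : ℝ} (hx : 1 / 2 < x) :
    largerRoot (tau x) = (1 - 2 * x + 8 * x ^ 2 +
        √(64 * x ^ 4 - 32 * x ^ 3 + 4 * x ^ 2 + 12 * x - 3)) / (2 * (2 * x - 1)) := by
  have hd : 0 < 2 * (2 * x - 1) := by linarith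
  have hsq : tau x ^ 2 - 1 =
      (64 * x ^ 4 - 32 * x ^ 3 + 4 * x ^ 2 + 12 * x - 3) / (2 * (2 * x - 1)) ^ 2 := by
    rw [tau, div_pow, div_sub_one (by positivity)]
    ring
  rw [largerRoot, hsq, Real.sqrt_div' _ (by positivity), Real.sqrt_sq hd.le, tau, add_div]
  ring

lemma largerRoot_tau_one_lt {x : ℝ} (hx : 1 / 2 < x) (hx₁ : x ≠ 1) :
    largerRoot (tau 1) < largerRoot (tau x) :=
  largerRoot_strictMonoOn (by norm_num [tau_one])
    (mem_Ici.mpr (by linarith [seven_halves_le_tau hx]))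
    (tau_one ▸ seven_halves_lt_tau hx hx₁)

lemma exists_hasDerivAt_largerRoot_tau_eq_sub_one_mul :
    ∃ k : ℝ → ℝ, ContinuousAt k 1 ∧ 0 < k 1 ∧
      ∀ x, 1 / 2 < x → HasDerivAt (fun y => largerRoot (tau y)) ((x - 1) * k x) x := by
  refine ⟨fun x => largerRootDeriv (tau x) * (8 * x / (2 * x - 1) ^ 2), ?_, ?_, fun x hx => ?_⟩
  · have htau := (hasDerivAt_tau (x := 1) (by norm_num)).continuousAt
    refine ((continuousAt_largerRootDeriv ?_).comp htau).mul (by fun_prop (disch := norm_num))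
    norm_num [tau_one]
  · exact mul_pos (largerRootDeriv_pos (by norm_num [tau_one])) (by norm_num)
  · have h := (hasDerivAt_largerRoot (by linarith [seven_halves_le_tau hx])).comp x
      (hasDerivAt_tau (x := x) (by linarith))
    exact h.congr_deriv (by ring)

/-- The unstable multiplier `λᵘ(x)` along the period-two curve satisfies
`λᵘ(1) = (7+3√5)/2`, `(λᵘ)'(1) = 0`, `(λᵘ)''(1) > 0`, and `λᵘ` has a strict
local minimum at `x = 1`. -/
theorem unstable_multiplier_local_min
    (lu : ℝ → ℝ)
    (hlu : ∀ x : ℝ, lu x =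
      (1 - 2 * x + 8 * x ^ 2 +
        Real.sqrt (64 * x ^ 4 - 32 * x ^ 3 + 4 * x ^ 2 + 12 * x - 3)) /
        (2 * (2 * x - 1))) :
    lu 1 = (7 + 3 * Real.sqrt 5) / 2 ∧
    deriv lu 1 = 0 ∧
    deriv (deriv lu) 1 > 0 ∧
    ∃ δ > 0, ∀ x : ℝ, x ≠ 1 → |x - 1| < δ → lu 1 < lu x := by
  have hlu_eq (x : ℝ) (hx : 1 / 2 < x) : lu x = largerRoot (tau x) :=
    (hlu x).trans (largerRoot_tau hx).symm
  obtain ⟨k, hk, hk_pos, hderiv⟩ := exists_hasDerivAt_largerRoot_tau_eq_sub_one_mul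
  have hlu_deriv (x : ℝ) (hx : 1 / 2 < x) : HasDerivAt lu ((x - 1) * k x) x :=
    (hderiv x hx).congr_of_eventuallyEq (eventually_of_mem (Ioi_mem_nhds hx) hlu_eq)
  have hderiv_near : deriv lu =ᶠ[𝓝 1] fun x => (x - 1) * k x := by
    filter_upwards [Ioi_mem_nhds (by norm_num : (1 : ℝ) / 2 < 1)] with x hx
      using (hlu_deriv x hx).deriv
  have hderiv2 : HasDerivAt (fun x => (x - 1) * k x) (k 1) 1 :=
    hasDerivAt_sub_smul_of_continuousAt hk
  refine ⟨?_, ?_, ?_, 1 / 2, by norm_num, fun x hx₁ hx => ?_⟩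
  · rw [hlu_eq 1 (by norm_num), tau_one, largerRoot_seven_halves]
  · simpa using (hlu_deriv 1 (by norm_num)).deriv
  · rwa [hderiv_near.deriv_eq, hderiv2.deriv]
  · have hx' : 1 / 2 < x := by linarith [(abs_lt.mp hx).1]
    rw [hlu_eq 1 (by norm_num), hlu_eq x hx']
    exact largerRoot_tau_one_lt hx' hx₁
end
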